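/- If in an OrchNet N' the latencies of all transitions not in a maximal configuration κ† exceed E_ω(κ†, N'), and the latencies of transitions in κ† are unchanged from N, then the race-policy construction yields κ̄(N', ω) = κ†. -/

import Mathlib

open scoped ENNReal Classical

/-- A Petri net: sets of places and transitions with flow given by pre/post sets,
    and initial marking `M0`. -/
structure PetriNet where
  P : Type
  T : Type
  pre : T → Set P
  post : T → Set P
  M0 : Set P

namespace PetriNet

variable (N : PetriNet)

/-- Nodes of a net: places or transitions. -/
abbrev Node := N.P ⊕ N.T

/-- One-step flow relation. -/
def prec : N.Node → N.Node → Prop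
  | Sum.inl p, Sum.inr t => p ∈ N.pre t
  | Sum.inr t, Sum.inl p => p ∈ N.post t
  | _, _ => False

/-- Causality (reflexive): reflexive-transitive closure of the flow relation. -/
def causLe : N.Node → N.Node → Prop := Relation.ReflTransGen N.prec

/-- Strict causality. -/
def causLt : N.Node → N.Node → Prop := Relation.TransGen N.prec

/-- Conflict: `x # y` iff distinct transitions below `x` and `y` share a preset place. -/
def Conflict (x y : N.Node) : Prop :=
  ∃ t t' : N.T, t ≠ t' ∧ N.causLe (Sum.inr t) x ∧ N.causLe (Sum.inr t') y ∧
    (N.pre t ∩ N.pre t').Nonempty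

/-- Concurrency. -/
def Concurrent (x y : N.Node) : Prop :=
  ¬ N.causLe x y ∧ ¬ N.causLe y x ∧ ¬ N.Conflict x y

/-- A configuration: causally closed and conflict-free set of nodes. -/
def IsConfiguration (κ : Set N.Node) : Prop :=
  (∀ x y : N.Node, N.causLe x y → y ∈ κ → x ∈ κ) ∧
  (∀ x ∈ κ, ∀ y ∈ κ, ¬ N.Conflict x y)

/-- Maximal configuration. -/
def IsMaxConfiguration (κ : Set N.Node) : Prop :=
  N.IsConfiguration κ ∧ ∀ κ', N.IsConfiguration κ' → κ ⊆ κ' → κ' = κ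

/-- A minimal place: no transition produces it. -/
def Minimal (p : N.P) : Prop := ∀ t : N.T, p ∉ N.post t

/-- Occurrence net: no self-conflict, causality a partial order with finite pasts,
    each place produced by at most one transition, `M0` the minimal places. -/
def IsOccurrenceNet : Prop :=
  (∀ x : N.Node, ¬ N.Conflict x x) ∧
  (∀ x y : N.Node, N.causLe x y → N.causLe y x → x = y) ∧
  (∀ t : N.T, {x : N.Node | N.causLe x (Sum.inr t)}.Finite) ∧
  (∀ p : N.P, {t : N.T | p ∈ N.post t}.Subsingleton) ∧
  (N.M0 = {p : N.P | N.Minimal p})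

/-! ### Timed semantics (dates, race policy) -/

/-- One step of the dating operator: a place gets the date of its producing transition
    (or its initial date if minimal), a transition is dated `max` of its preset dates
    plus its latency. -/
noncomputable def dateF (τ : N.T → ℝ≥0∞) (init : N.P → ℝ≥0∞)
    (f : N.Node → ℝ≥0∞) : N.Node → ℝ≥0∞
  | Sum.inl p => if N.Minimal p then init p else ⨆ t ∈ {t : N.T | p ∈ N.post t}, f (Sum.inr t)
  | Sum.inr t => (⨆ p ∈ N.pre t, f (Sum.inl p)) + τ t

/-- The date of each node (least fixed point of `dateF`; on finite acyclic nets this is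
    the usual recursive definition of dates). -/
noncomputable def date (τ : N.T → ℝ≥0∞) (init : N.P → ℝ≥0∞) : N.Node → ℝ≥0∞ :=
  ⨆ k, (N.dateF τ init)^[k] ⊥

/-- Execution time (latency) of a set of nodes: max of the dates of its nodes. -/
noncomputable def execTime (τ : N.T → ℝ≥0∞) (init : N.P → ℝ≥0∞) (κ : Set N.Node) : ℝ≥0∞ :=
  ⨆ x ∈ κ, N.date τ init x

/-- Transition `t` can extend configuration `κ`: it is enabled (preset in `κ`),
    not yet fired, and firing it keeps a configuration (no conflict with `κ`). -/
def Extends (κ : Set N.Node) (t : N.T) : Prop :=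
  Sum.inr t ∉ κ ∧ (∀ p ∈ N.pre t, Sum.inl p ∈ κ) ∧
  N.IsConfiguration (κ ∪ {Sum.inr t} ∪ Sum.inl '' N.post t)

/-- One step of the race policy: among the enabled transitions, one with minimal
    date fires (preempting its conflicting rivals). -/
def RaceStep (τ : N.T → ℝ≥0∞) (init : N.P → ℝ≥0∞) (κ κ' : Set N.Node) : Prop :=
  ∃ t : N.T, N.Extends κ t ∧
    (∀ t' : N.T, N.Extends κ t' → N.date τ init (Sum.inr t) ≤ N.date τ init (Sum.inr t')) ∧
    κ' = κ ∪ {Sum.inr t} ∪ Sum.inl '' N.post t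

/-- The initial configuration: the minimal places. -/
def initConf : Set N.Node := Sum.inl '' {p : N.P | N.Minimal p}

/-- `κ` is an actually occurring configuration under the race policy. -/
def Occurs (τ : N.T → ℝ≥0∞) (init : N.P → ℝ≥0∞) (κ : Set N.Node) : Prop :=
  Relation.ReflTransGen (N.RaceStep τ init) N.initConf κ ∧ ∀ t : N.T, ¬ N.Extends κ t

/-! ### Clusters -/

/-- Closure conditions for clusters: `t ∈ c → •t ⊆ c` and `p ∈ c → p• ⊆ c`. -/
def ClusterClosed (c : Set N.Node) : Prop :=
  (∀ t : N.T, Sum.inr t ∈ c → ∀ p ∈ N.pre t, Sum.inl p ∈ c) ∧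
  (∀ p : N.P, Sum.inl p ∈ c → ∀ t : N.T, p ∈ N.pre t → Sum.inr t ∈ c)

/-- A cluster: a minimal nonempty set of nodes satisfying the closure conditions. -/
def IsCluster (c : Set N.Node) : Prop :=
  c.Nonempty ∧ N.ClusterClosed c ∧
  ∀ c' : Set N.Node, c'.Nonempty → N.ClusterClosed c' → c' ⊆ c → c' = c

/-! ### Marking semantics, workflow nets -/

/-- Firing a transition in the (1-safe, set-based) marking semantics. -/
def Fires (M : Set N.P) (t : N.T) (M' : Set N.P) : Prop :=
  N.pre t ⊆ M ∧ M' = (M \ N.pre t) ∪ N.post t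

/-- Reachability between markings. -/
def Reach : Set N.P → Set N.P → Prop :=
  Relation.ReflTransGen (fun M M' => ∃ t : N.T, N.Fires M t M')

end PetriNet

open PetriNet

/-- Workflow net with source place `i` and sink place `o`. -/
def IsWorkflow (N : PetriNet) (i o : N.P) : Prop :=
  (∀ p : N.P, (∀ t : N.T, p ∉ N.post t) ↔ p = i) ∧
  (∀ p : N.P, (∀ t : N.T, p ∉ N.pre t) ↔ p = o) ∧
  N.M0 = {i}

/-- Soundness of a workflow net. -/
def IsSound (N : PetriNet) (i o : N.P) : Prop :=
  (∀ M, N.Reach {i} M → N.Reach M {o}) ∧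
  (∀ M, N.Reach {i} M → o ∈ M → M = {o}) ∧
  (∀ t : N.T, ∃ M, N.Reach {i} M ∧ N.pre t ⊆ M)

/-- 1-safety in the set-based semantics: a fired transition never re-marks a
    still-marked place. -/
def IsSafe (N : PetriNet) (i : N.P) : Prop :=
  ∀ M t M', N.Reach {i} M → N.Fires M t M' → (M \ N.pre t) ∩ N.post t = ∅

/-- Loop-freeness: the flow relation is acyclic. -/
def LoopFree (N : PetriNet) : Prop := ∀ x : N.Node, ¬ N.causLt x x

/-- Net morphism: maps places to places and transitions to transitions, restricting
    to bijections on presets and postsets of transitions. -/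
structure NetMorphism (U W : PetriNet) where
  fP : U.P → W.P
  fT : U.T → W.T
  pre_bij : ∀ t : U.T, Set.BijOn fP (U.pre t) (W.pre (fT t))
  post_bij : ∀ t : U.T, Set.BijOn fP (U.post t) (W.post (fT t))

/-- The induced map on nodes. -/
def NetMorphism.node {U W : PetriNet} (φ : NetMorphism U W) : U.Node → W.Node :=
  Sum.map φ.fP φ.fT

/-- `(U, φ)` is (a) branching-process unfolding of `W`: `U` is an occurrence net,
    `φ` a morphism mapping the minimal places of `U` bijectively onto those of `W`,
    and every co-set of `U` matching the preset of a transition of `W` is the preset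
    of exactly one transition of `U` above it. -/
def IsUnfolding (U W : PetriNet) (φ : NetMorphism U W) : Prop :=
  U.IsOccurrenceNet ∧
  Set.BijOn φ.fP {p : U.P | U.Minimal p} {p : W.P | ∀ t : W.T, p ∉ W.post t} ∧
  (∀ (X : Set U.P) (u : W.T),
    (∀ p ∈ X, ∀ q ∈ X, p = q ∨ U.Concurrent (Sum.inl p) (Sum.inl q)) →
    Set.BijOn φ.fP X (W.pre u) →
    ∃! t : U.T, U.pre t = X ∧ φ.fT t = u)

/-!
The race policy never fires a transition outside `κ†`. As long as `κ†` is not reached, a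
causally minimal unfired transition of `κ†` is enabled; its date is at most `E_ω(κ†)`, whereas
a transition outside `κ†` is dated after its own latency, which exceeds `E_ω(κ†)`. Every step
fires a new transition, so on a finite net the run terminates, and a run that stays inside `κ†`
and cannot be extended any further is `κ†` itself.
-/

namespace PetriNet

variable {N : PetriNet}

section Causality

theorem causLe_of_mem_pre {p : N.P} {t : N.T} (hp : p ∈ N.pre t) :
    N.causLe (Sum.inl p) (Sum.inr t) :=
  Relation.ReflTransGen.single hp

theorem causLe_of_mem_post {p : N.P} {t : N.T} (hp : p ∈ N.post t) :
    N.causLe (Sum.inr t) (Sum.inl p) :=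
  Relation.ReflTransGen.single hp

theorem eq_or_exists_of_causLe_inr {x : N.Node} {t : N.T} (h : N.causLe x (Sum.inr t)) :
    x = Sum.inr t ∨ ∃ p ∈ N.pre t, N.causLe x (Sum.inl p) := by
  rcases Relation.ReflTransGen.cases_tail h with h | ⟨(p | s), hxy, hy⟩
  · exact Or.inl h.symm
  · exact Or.inr ⟨p, hy, hxy⟩
  · exact hy.elim

theorem eq_or_exists_of_causLe_inl {x : N.Node} {p : N.P} (h : N.causLe x (Sum.inl p)) :
    x = Sum.inl p ∨ ∃ t, p ∈ N.post t ∧ N.causLe x (Sum.inr t) := by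
  rcases Relation.ReflTransGen.cases_tail h with h | ⟨(q | s), hxy, hy⟩
  · exact Or.inl h.symm
  · exact hy.elim
  · exact Or.inr ⟨s, hy, hxy⟩

theorem IsOccurrenceNet.causLe_of_causLe_post (hN : N.IsOccurrenceNet) {x : N.Node} {p : N.P}
    {t : N.T} (hp : p ∈ N.post t) (hx : N.causLe x (Sum.inl p)) (hne : x ≠ Sum.inl p) :
    N.causLe x (Sum.inr t) := by
  rcases eq_or_exists_of_causLe_inl hx with rfl | ⟨s, hs, hxs⟩
  · exact absurd rfl hne
  · rwa [hN.2.2.2.1 p hs hp] at hxs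

theorem IsOccurrenceNet.causLt_irrefl (hN : N.IsOccurrenceNet) (x : N.Node) :
    ¬ N.causLt x x := by
  intro h
  obtain ⟨y, hxy, hyx⟩ := Relation.TransGen.head'_iff.mp h
  have hne : x ≠ y := by
    rintro rfl
    rcases x with p | t <;> exact hxy
  exact hne (hN.2.1 x y (Relation.ReflTransGen.single hxy) hyx)

end Causality

section Configurations

theorem mem_initConf_iff {p : N.P} : Sum.inl p ∈ N.initConf ↔ N.Minimal p := by
  simp [initConf]

theorem eq_of_causLe_of_mem_initConf {x y : N.Node} (hx : x ∈ N.initConf)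
    (h : N.causLe y x) : y = x := by
  obtain ⟨p, hp, rfl⟩ := hx
  rcases eq_or_exists_of_causLe_inl h with h | ⟨t, ht, -⟩
  · exact h
  · exact (hp t ht).elim

theorem not_causLe_inr_of_mem_initConf {x : N.Node} (hx : x ∈ N.initConf) (t : N.T) :
    ¬ N.causLe (Sum.inr t) x := by
  intro h
  obtain ⟨p, hp, rfl⟩ := hx
  exact Sum.inr_ne_inl (eq_of_causLe_of_mem_initConf ⟨p, hp, rfl⟩ h)

theorem isConfiguration_initConf : N.IsConfiguration N.initConf := by
  refine ⟨fun x y h hy => eq_of_causLe_of_mem_initConf hy h ▸ hy, ?_⟩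
  rintro x hx y - ⟨t, -, -, htx, -, -⟩
  exact not_causLe_inr_of_mem_initConf hx t htx

theorem IsConfiguration.not_conflict {κ : Set N.Node} (hκ : N.IsConfiguration κ) {x y : N.Node}
    (hx : ∀ t, N.causLe (Sum.inr t) x → Sum.inr t ∈ κ)
    (hy : ∀ t, N.causLe (Sum.inr t) y → Sum.inr t ∈ κ) : ¬ N.Conflict x y := by
  rintro ⟨t, t', hne, htx, hty, hpre⟩
  exact hκ.2 _ (hx t htx) _ (hy t' hty) ⟨t, t', hne, .refl, .refl, hpre⟩

theorem IsConfiguration.union {κ X : Set N.Node} (hκ : N.IsConfiguration κ)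
    (hdown : ∀ x ∈ X, ∀ y, N.causLe y x → y ∈ κ ∪ X)
    (hinr : ∀ x ∈ X, ∀ t, N.causLe (Sum.inr t) x → Sum.inr t ∈ κ) :
    N.IsConfiguration (κ ∪ X) := by
  have hbelow : ∀ x ∈ κ ∪ X, ∀ t, N.causLe (Sum.inr t) x → Sum.inr t ∈ κ := by
    rintro x (hx | hx) t ht
    exacts [hκ.1 _ _ ht hx, hinr x hx t ht]
  refine ⟨?_, fun x hx y hy => hκ.not_conflict (hbelow x hx) (hbelow y hy)⟩
  rintro y x hyx (hx | hx)
  exacts [Or.inl (hκ.1 y x hyx hx), hdown x hx y hyx]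

theorem IsMaxConfiguration.subset_of_isConfiguration_union {κ X : Set N.Node}
    (hκ : N.IsMaxConfiguration κ) (h : N.IsConfiguration (κ ∪ X)) : X ⊆ κ :=
  hκ.2 _ h Set.subset_union_left ▸ Set.subset_union_right

theorem IsMaxConfiguration.initConf_subset {κ : Set N.Node} (hκ : N.IsMaxConfiguration κ) :
    N.initConf ⊆ κ := by
  refine hκ.subset_of_isConfiguration_union (hκ.1.union ?_ ?_)
  · exact fun x hx y h => Or.inr (eq_of_causLe_of_mem_initConf hx h ▸ hx)
  · exact fun x hx t h => (not_causLe_inr_of_mem_initConf hx t h).elim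

theorem IsMaxConfiguration.post_subset (hN : N.IsOccurrenceNet) {κ : Set N.Node}
    (hκ : N.IsMaxConfiguration κ) {t : N.T} (ht : Sum.inr t ∈ κ) :
    Sum.inl '' N.post t ⊆ κ := by
  refine hκ.subset_of_isConfiguration_union (hκ.1.union ?_ ?_)
  · rintro _ ⟨p, hp, rfl⟩ y hy
    by_cases hyp : y = Sum.inl p
    · exact Or.inr ⟨p, hp, hyp.symm⟩
    · exact Or.inl (hκ.1.1 _ _ (hN.causLe_of_causLe_post hp hy hyp) ht)
  · rintro _ ⟨p, hp, rfl⟩ s hs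
    exact hκ.1.1 _ _ (hN.causLe_of_causLe_post hp hs Sum.inr_ne_inl) ht

theorem IsMaxConfiguration.not_extends {κ : Set N.Node} (hκ : N.IsMaxConfiguration κ)
    (t : N.T) : ¬ N.Extends κ t := fun ⟨htκ, _, hconf⟩ =>
  htκ (hκ.2 _ hconf (Set.subset_union_left.trans Set.subset_union_left) ▸ Or.inl (Or.inr rfl))

end Configurations

section Race

variable {τ : N.T → ℝ≥0∞} {init : N.P → ℝ≥0∞}

theorem le_date_inr (t : N.T) :
    τ t ≤ N.date τ init (Sum.inr t) := by
  have h : (N.dateF τ init)^[1] ⊥ (Sum.inr t) = τ t := by simp [dateF]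
  rw [date, iSup_apply, ← h]
  exact le_iSup (fun k => (N.dateF τ init)^[k] ⊥ (Sum.inr t)) 1

theorem exists_raceStep [Finite N.T] {κ : Set N.Node} {t : N.T} (ht : N.Extends κ t) :
    ∃ κ', N.RaceStep τ init κ κ' := by
  obtain ⟨s, hs, hmin⟩ := Set.exists_min_image {t | N.Extends κ t}
    (fun t => N.date τ init (Sum.inr t)) (Set.toFinite _) ⟨t, ht⟩
  exact ⟨_, s, hs, hmin, rfl⟩

theorem RaceStep.unfired_ssubset {κ κ' : Set N.Node} (h : N.RaceStep τ init κ κ') :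
    {t | Sum.inr t ∉ κ'} ⊂ {t | Sum.inr t ∉ κ} := by
  obtain ⟨t, ht, -, rfl⟩ := h
  refine ⟨fun s hs hsκ => hs (Or.inl (Or.inl hsκ)), fun hsub => ?_⟩
  exact hsub ht.1 (Or.inl (Or.inr rfl))

theorem exists_reflTransGen_raceStep_terminal [Finite N.T] (κ : Set N.Node) :
    ∃ κ', Relation.ReflTransGen (N.RaceStep τ init) κ κ' ∧ ∀ t, ¬ N.Extends κ' t := by
  induction hn : {t | Sum.inr t ∉ κ}.ncard using Nat.strong_induction_on generalizing κ with
  | _ n ih =>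
    by_cases hterm : ∃ t, N.Extends κ t
    · obtain ⟨t, ht⟩ := hterm
      obtain ⟨κ₁, hstep⟩ := exists_raceStep (τ := τ) (init := init) ht
      obtain ⟨κ', hreach, hκ'⟩ :=
        ih _ (hn ▸ Set.ncard_lt_ncard hstep.unfired_ssubset) κ₁ rfl
      exact ⟨κ', .head hstep hreach, hκ'⟩
    · exact ⟨κ, .refl, fun t ht => hterm ⟨t, ht⟩⟩

end Race

section Prefix

/-- The configurations the race policy passes through on its way to `κdag`. -/
structure IsPrefixOf (N : PetriNet) (κ κdag : Set N.Node) : Prop where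
  subset : κ ⊆ κdag
  initConf_subset : N.initConf ⊆ κ
  isConfiguration : N.IsConfiguration κ
  post_mem : ∀ t, Sum.inr t ∈ κ → ∀ p ∈ N.post t, Sum.inl p ∈ κ

variable {κ κdag : Set N.Node}

theorem IsMaxConfiguration.isPrefixOf_initConf (hκdag : N.IsMaxConfiguration κdag) :
    N.IsPrefixOf N.initConf κdag where
  subset := hκdag.initConf_subset
  initConf_subset := subset_rfl
  isConfiguration := isConfiguration_initConf
  post_mem := by rintro t ⟨p, -, h⟩; cases h

theorem IsPrefixOf.exists_producer (h : N.IsPrefixOf κ κdag) (hκdag : N.IsConfiguration κdag)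
    {p : N.P} (hp : Sum.inl p ∈ κdag) (hpκ : Sum.inl p ∉ κ) :
    ∃ s, p ∈ N.post s ∧ Sum.inr s ∈ κdag ∧ Sum.inr s ∉ κ := by
  have hmin : ¬ N.Minimal p := fun hmin => hpκ (h.initConf_subset (mem_initConf_iff.mpr hmin))
  simp only [Minimal, not_forall, not_not] at hmin
  obtain ⟨s, hs⟩ := hmin
  exact ⟨s, hs, hκdag.1 _ _ (causLe_of_mem_post hs) hp, fun hsκ => hpκ (h.post_mem s hsκ p hs)⟩

theorem IsPrefixOf.exists_unfired (h : N.IsPrefixOf κ κdag) (hκdag : N.IsConfiguration κdag)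
    (hne : κ ≠ κdag) : ∃ t, Sum.inr t ∈ κdag ∧ Sum.inr t ∉ κ := by
  obtain ⟨x | t, hx, hxκ⟩ := Set.exists_of_ssubset (h.subset.ssubset_of_ne hne)
  · obtain ⟨s, -, hs⟩ := h.exists_producer hκdag hx hxκ
    exact ⟨s, hs⟩
  · exact ⟨t, hx, hxκ⟩

theorem IsPrefixOf.fire_subset (hN : N.IsOccurrenceNet) (hκdag : N.IsMaxConfiguration κdag)
    (h : N.IsPrefixOf κ κdag) {t : N.T} (ht : Sum.inr t ∈ κdag) :
    κ ∪ {Sum.inr t} ∪ Sum.inl '' N.post t ⊆ κdag :=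
  Set.union_subset (Set.union_subset h.subset (Set.singleton_subset_iff.mpr ht))
    (hκdag.post_subset hN ht)

theorem IsPrefixOf.extends_of_pre_subset (hN : N.IsOccurrenceNet)
    (hκdag : N.IsMaxConfiguration κdag) (h : N.IsPrefixOf κ κdag) {t : N.T}
    (ht : Sum.inr t ∈ κdag) (htκ : Sum.inr t ∉ κ) (hpre : ∀ p ∈ N.pre t, Sum.inl p ∈ κ) :
    N.Extends κ t := by
  have hsub := h.fire_subset hN hκdag ht
  refine ⟨htκ, hpre, ?_, fun x hx y hy => hκdag.1.2 x (hsub hx) y (hsub hy)⟩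
  have hbelow_t : ∀ y, N.causLe y (Sum.inr t) → y ∈ κ ∪ {Sum.inr t} := by
    intro y hy
    rcases eq_or_exists_of_causLe_inr hy with rfl | ⟨p, hp, hyp⟩
    exacts [Or.inr rfl, Or.inl (h.isConfiguration.1 _ _ hyp (hpre p hp))]
  rintro y x hyx ((hx | rfl) | ⟨p, hp, rfl⟩)
  · exact Or.inl (Or.inl (h.isConfiguration.1 y x hyx hx))
  · exact Or.inl (hbelow_t y hyx)
  · by_cases hyp : y = Sum.inl p
    · exact Or.inr ⟨p, hp, hyp.symm⟩
    · exact Or.inl (hbelow_t y (hN.causLe_of_causLe_post hp hyx hyp))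

/-- A causally minimal unfired transition of `κdag` has its whole preset in `κ`. -/
theorem IsPrefixOf.exists_extends [Finite N.T] (hN : N.IsOccurrenceNet)
    (hκdag : N.IsMaxConfiguration κdag) (h : N.IsPrefixOf κ κdag) (hne : κ ≠ κdag) :
    ∃ t, Sum.inr t ∈ κdag ∧ N.Extends κ t := by
  let r : N.T → N.T → Prop := fun s t => N.causLt (Sum.inr s) (Sum.inr t)
  have : IsTrans N.T r := ⟨fun _ _ _ => Relation.TransGen.trans⟩
  have : Std.Irrefl r := ⟨fun t => hN.causLt_irrefl (Sum.inr t)⟩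
  obtain ⟨t, ⟨ht, htκ⟩, hmin⟩ := (Finite.wellFounded_of_trans_of_irrefl r).has_min
    {t | Sum.inr t ∈ κdag ∧ Sum.inr t ∉ κ} (h.exists_unfired hκdag.1 hne)
  refine ⟨t, ht, h.extends_of_pre_subset hN hκdag ht htκ fun p hp => ?_⟩
  by_contra hpκ
  obtain ⟨s, hs, hsκdag, hsκ⟩ :=
    h.exists_producer hκdag.1 (hκdag.1.1 _ _ (causLe_of_mem_pre hp) ht) hpκ
  exact hmin s ⟨hsκdag, hsκ⟩ (.tail' (causLe_of_mem_post hs) hp)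

theorem IsPrefixOf.eq_of_forall_not_extends [Finite N.T] (hN : N.IsOccurrenceNet)
    (hκdag : N.IsMaxConfiguration κdag) (h : N.IsPrefixOf κ κdag)
    (hterm : ∀ t, ¬ N.Extends κ t) : κ = κdag := by
  by_contra hne
  obtain ⟨t, -, ht⟩ := h.exists_extends hN hκdag hne
  exact hterm t ht

theorem IsPrefixOf.fire (hN : N.IsOccurrenceNet) (hκdag : N.IsMaxConfiguration κdag)
    (h : N.IsPrefixOf κ κdag) {t : N.T} (ht : Sum.inr t ∈ κdag) (hext : N.Extends κ t) :
    N.IsPrefixOf (κ ∪ {Sum.inr t} ∪ Sum.inl '' N.post t) κdag where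
  subset := h.fire_subset hN hκdag ht
  initConf_subset := h.initConf_subset.trans (Set.subset_union_left.trans Set.subset_union_left)
  isConfiguration := hext.2.2
  post_mem := by
    rintro s ((hs | hs) | ⟨q, -, hqs⟩) p hp
    · exact Or.inl (Or.inl (h.post_mem s hs p hp))
    · cases hs
      exact Or.inr ⟨p, hp, rfl⟩
    · cases hqs

/-- A transition outside `κdag` is dated after every node of `κdag`, so it loses the race
against the unfired transition of `κdag` that `exists_extends` provides. -/
theorem IsPrefixOf.raceStep [Finite N.T] {τ : N.T → ℝ≥0∞} {init : N.P → ℝ≥0∞}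
    (hN : N.IsOccurrenceNet) (hκdag : N.IsMaxConfiguration κdag)
    (hbig : ∀ t, Sum.inr t ∉ κdag → N.execTime τ init κdag < τ t)
    (h : N.IsPrefixOf κ κdag) {κ' : Set N.Node} (hstep : N.RaceStep τ init κ κ') :
    N.IsPrefixOf κ' κdag := by
  obtain ⟨t, hext, hfirst, rfl⟩ := hstep
  have hne : κ ≠ κdag := by
    rintro rfl
    exact hκdag.not_extends t hext
  obtain ⟨s, hs, hsext⟩ := h.exists_extends hN hκdag hne
  refine h.fire hN hκdag ?_ hext
  by_contra ht
  refine (hbig t ht).not_ge ?_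
  calc τ t ≤ N.date τ init (Sum.inr t) := le_date_inr t
    _ ≤ N.date τ init (Sum.inr s) := hfirst s hsext
    _ ≤ N.execTime τ init κdag := le_biSup _ hs

end Prefix

end PetriNet

theorem stmt9_general (N : PetriNet) [Fintype N.T] (hN : N.IsOccurrenceNet)
    (κdag : Set N.Node) (hκdag : N.IsMaxConfiguration κdag)
    (τ' : N.T → ℝ≥0∞) (init : N.P → ℝ≥0∞)
    (hbig : ∀ t : N.T, Sum.inr t ∉ κdag →
      N.execTime τ' init κdag < τ' t) :
    N.Occurs τ' init κdag ∧ ∀ κ : Set N.Node, N.Occurs τ' init κ → κ = κdag := by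
  have hprefix : ∀ κ, Relation.ReflTransGen (N.RaceStep τ' init) N.initConf κ →
      N.IsPrefixOf κ κdag := fun κ hreach => by
    induction hreach with
    | refl => exact hκdag.isPrefixOf_initConf
    | tail _ hstep ih => exact ih.raceStep hN hκdag hbig hstep
  have hunique : ∀ κ, N.Occurs τ' init κ → κ = κdag := fun κ ⟨hreach, hterm⟩ =>
    (hprefix κ hreach).eq_of_forall_not_extends hN hκdag hterm
  obtain ⟨κ, hreach, hterm⟩ := exists_reflTransGen_raceStep_terminal (τ := τ') (init := init)
    N.initConf
  obtain rfl := hunique κ ⟨hreach, hterm⟩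
  exact ⟨⟨hreach, hterm⟩, hunique⟩

/-- key construction lemma of Theorem 1's necessity part: if the
    latencies of all transitions outside a maximal configuration `κ†` exceed the
    execution time of `κ†`, then the race policy executes exactly `κ†`. -/
theorem stmt9 (N : PetriNet) [Fintype N.P] [Fintype N.T] (hN : N.IsOccurrenceNet)
    (κdag : Set N.Node) (hκdag : N.IsMaxConfiguration κdag)
    (τ τ' : N.T → ℝ≥0∞) (init : N.P → ℝ≥0∞)
    (hsame : ∀ t : N.T, Sum.inr t ∈ κdag → τ' t = τ t)
    (hbig : ∀ t : N.T, Sum.inr t ∉ κdag →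
      N.execTime τ' init κdag < τ' t) :
    N.Occurs τ' init κdag ∧ ∀ κ : Set N.Node, N.Occurs τ' init κ → κ = κdag :=
  stmt9_general N hN κdag hκdag τ' init hbig
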